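/- arXiv:2209.02041 — 2 statements merged into one kernel-verified Lean document; each statement's English description precedes it below -/
import Mathlib

section
/- Let (X,r) be a solution and k a positive integer. Then the k-cabled data again form a solution on X: every σ^{(k)}_x and every τ^{(k)}_x is a bijection of X, and the map r^{(k)} : X × X → X × X, r^{(k)}(x,y) = (σ^{(k)}_x(y), τ^{(k)}_y(x)), satisfies r^{(k)} ∘ r^{(k)} = id and the braid relation (r^{(k)} × id) ∘ (id × r^{(k)}) ∘ (r^{(k)} × id) = (id × r^{(k)}) ∘ (r^{(k)} × id) ∘ (id × r^{(k)}). -/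
open Function

variable {X : Type*}

/-- The map `r(x,y) = (σ_x(y), τ_y(x))` built from two families of bijections. -/
def ybR (σ τ : X → Equiv.Perm X) : X × X → X × X :=
  fun p => (σ p.1 p.2, τ p.2 p.1)

/-- Apply a map `X × X → X × X` to the first two coordinates of a triple (`r × id`). -/
def lmap (r : X × X → X × X) : X × X × X → X × X × X :=
  fun p => ((r (p.1, p.2.1)).1, ((r (p.1, p.2.1)).2, p.2.2))

/-- Apply a map `X × X → X × X` to the last two coordinates of a triple (`id × r`). -/
def rmap (r : X × X → X × X) : X × X × X → X × X × X :=
  fun p => (p.1, r p.2)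

/-- A finite non-degenerate involutive set-theoretic solution of the Yang--Baxter
equation on a finite set `X` with `|X| > 1`. -/
structure YBSolution (X : Type*) [Fintype X] where
  σ : X → Equiv.Perm X
  τ : X → Equiv.Perm X
  card_gt_one : 1 < Fintype.card X
  involutive : ∀ p : X × X, ybR σ τ (ybR σ τ p) = p
  braid : lmap (ybR σ τ) ∘ rmap (ybR σ τ) ∘ lmap (ybR σ τ)
        = rmap (ybR σ τ) ∘ lmap (ybR σ τ) ∘ rmap (ybR σ τ)

namespace YBSolution

variable [Fintype X]

/-- The diagonal map `T(x) = τ_x⁻¹(x)`. -/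
def T (S : YBSolution X) (x : X) : X := (S.τ x).symm x

/-- The map `U(x) = σ_x⁻¹(x)`, the inverse of the diagonal map. -/
def U (S : YBSolution X) (x : X) : X := (S.σ x).symm x

/-- The `k`-cabled sigma maps (also denoted `π_k`):
`σ^{(k)}_x = σ_x ∘ σ_{U(x)} ∘ ⋯ ∘ σ_{U^{k-1}(x)}`. -/
def sigmaCab (S : YBSolution X) : ℕ → X → X → X
  | 0, _ => id
  | k + 1, x => ⇑(S.σ x) ∘ S.sigmaCab k (S.U x)

/-- The composition `τ_{U^{k-1}(y)} ∘ ⋯ ∘ τ_{U(y)} ∘ τ_y`. -/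
def tauChain (S : YBSolution X) : ℕ → X → X → X
  | 0, _ => id
  | k + 1, y => S.tauChain k (S.U y) ∘ ⇑(S.τ y)

/-- The `k`-cabled tau maps:
`τ^{(k)}_y = T^{k-1} ∘ τ_{U^{k-1}(y)} ∘ ⋯ ∘ τ_{U(y)} ∘ τ_y ∘ T^{-(k-1)}`,
where `T^{-(k-1)} = U^{k-1}` since `U` is the inverse of `T`. -/
def tauCab (S : YBSolution X) (k : ℕ) (y : X) : X → X :=
  S.T^[k - 1] ∘ S.tauChain k y ∘ S.U^[k - 1]

/-- The `k`-cabled solution `r^{(k)}(x,y) = (σ^{(k)}_x(y), τ^{(k)}_y(x))`. -/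
def rCab (S : YBSolution X) (k : ℕ) : X × X → X × X :=
  fun p => (S.sigmaCab k p.1 p.2, S.tauCab k p.2 p.1)

/-- The permutation group `𝒢(X,r)`, generated by the `σ_x`. -/
def G (S : YBSolution X) : Subgroup (Equiv.Perm X) :=
  Subgroup.closure (Set.range S.σ)

/-- The permutation group `𝒢(X,r^{(k)})` of the `k`-cabled solution,
generated by the `σ^{(k)}_x`. -/
def Gcab (S : YBSolution X) (k : ℕ) : Subgroup (Equiv.Perm X) :=
  Subgroup.closure {g : Equiv.Perm X | ∃ x : X, ⇑g = S.sigmaCab k x}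

/-- The orbit of `x` under the diagonal map `T`. -/
def Torbit (S : YBSolution X) (x : X) : Set X := {y | ∃ n : ℕ, S.T^[n] x = y}

/-- The orbit of `x` under `𝒢(X,r)`. -/
def Gorbit (S : YBSolution X) (x : X) : Set X := {y | ∃ g ∈ S.G, g x = y}

/-- The orbit of `x` under `𝒢(X,r^{(k)})`. -/
def GcabOrbit (S : YBSolution X) (k : ℕ) (x : X) : Set X :=
  {y | ∃ g ∈ S.Gcab k, g x = y}

/-- A solution is indecomposable when `𝒢(X,r)` acts transitively on `X`. -/
def IsIndecomposable (S : YBSolution X) : Prop := ∀ x y : X, ∃ g ∈ S.G, g x = y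

end YBSolution

/-!
Under the braid-group action of `r`, a cable `(x, U x, …, U^{k-1} x)` crossing a cable
`(y, U y, …, U^{k-1} y)` produces again two cables, with heads `σ^{(k)}_x(y)` and
`τ^{(k)}_y(x)`. Letting the elements cross one at a time yields the first components of
involutivity and of the braid relation for `r^{(k)}`. For a map `(x, y) ↦ (s x y, t y x)`
with every `s x` injective, these two identities already force the full involutivity and
braid relation.
-/

def pairMap (s t : X → X → X) : X × X → X × X := fun p => (s p.1 p.2, t p.2 p.1)

section LeftNondegenerate

variable {s t : X → X → X}

theorem pairMap_snd_of_fst (hinj : ∀ x, Injective (s x))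
    (h1 : ∀ x y, s (s x y) (t y x) = x) (x y : X) : t (t y x) (s x y) = y :=
  hinj x <| by simpa only [h1] using h1 (s x y) (t y x)

theorem pairMap_involutive (hinj : ∀ x, Injective (s x))
    (h1 : ∀ x y, s (s x y) (t y x) = x) : Involutive (pairMap s t) :=
  fun p => Prod.ext (h1 p.1 p.2) (pairMap_snd_of_fst hinj h1 p.1 p.2)

theorem braid_snd_of_fst (hinj : ∀ x, Injective (s x)) (h1 : ∀ x y, s (s x y) (t y x) = x)
    (hb1 : ∀ x y z, s (s x y) (s (t y x) z) = s x (s y z)) (x y z : X) :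
    t (s (t y x) z) (s x y) = s (t (s y z) x) (t z y) := by
  refine hinj (s x (s y z)) ?_
  calc s (s x (s y z)) (t (s (t y x) z) (s x y))
      = s x y := by simpa only [hb1] using h1 (s x y) (s (t y x) z)
    _ = s (s x (s y z)) (s (t (s y z) x) (t z y)) := by rw [hb1, h1]

theorem braid_thd_of_fst (hinj : ∀ x, Injective (s x)) (h1 : ∀ x y, s (s x y) (t y x) = x)
    (hb1 : ∀ x y z, s (s x y) (s (t y x) z) = s x (s y z)) (x y z : X) :
    t z (t y x) = t (t z y) (t (s y z) x) := by
  have key : s (s x y) (s (s (t y x) z) (t (t z y) (t (s y z) x))) = x := by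
    rw [← hb1, hb1 x y z, braid_snd_of_fst hinj h1 hb1, h1, h1]
  refine hinj (s (t y x) z) ((h1 (t y x) z).trans ?_)
  exact (hinj (s x y) (key.trans (h1 x y).symm)).symm

theorem pairMap_braid (hinj : ∀ x, Injective (s x)) (h1 : ∀ x y, s (s x y) (t y x) = x)
    (hb1 : ∀ x y z, s (s x y) (s (t y x) z) = s x (s y z)) :
    lmap (pairMap s t) ∘ rmap (pairMap s t) ∘ lmap (pairMap s t)
      = rmap (pairMap s t) ∘ lmap (pairMap s t) ∘ rmap (pairMap s t) := by
  funext ⟨x, y, z⟩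
  exact Prod.ext (hb1 x y z)
    (Prod.ext (braid_snd_of_fst hinj h1 hb1 x y z) (braid_thd_of_fst hinj h1 hb1 x y z))

end LeftNondegenerate

namespace YBSolution

variable [Fintype X] (S : YBSolution X)

theorem sigma_sigma_tau (x y : X) : S.σ (S.σ x y) (S.τ y x) = x :=
  congrArg Prod.fst (S.involutive (x, y))

theorem tau_tau_sigma (x y : X) : S.τ (S.τ y x) (S.σ x y) = y :=
  congrArg Prod.snd (S.involutive (x, y))

theorem sigma_sigma_sigma (x y z : X) :
    S.σ (S.σ x y) (S.σ (S.τ y x) z) = S.σ x (S.σ y z) :=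
  congrArg Prod.fst (congrFun S.braid (x, y, z))

theorem tau_tau_tau (x y z : X) : S.τ z (S.τ y x) = S.τ (S.τ z y) (S.τ (S.σ y z) x) :=
  congrArg (·.2.2) (congrFun S.braid (x, y, z))

theorem sigma_U (x : X) : S.σ x (S.U x) = x := Equiv.apply_symm_apply _ _

theorem tau_T (x : X) : S.τ x (S.T x) = x := Equiv.apply_symm_apply _ _

theorem tau_U (x : X) : S.τ (S.U x) x = S.U x :=
  (S.σ x).injective <| by simpa only [sigma_U] using S.sigma_sigma_tau x (S.U x)

theorem sigma_T (x : X) : S.σ (S.T x) x = S.T x :=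
  (S.τ x).injective <| by simpa only [tau_T] using S.tau_tau_sigma (S.T x) x

theorem T_U (x : X) : S.T (S.U x) = x := ((S.τ _).symm_apply_eq).mpr (S.tau_U x).symm

theorem U_T (x : X) : S.U (S.T x) = x := ((S.σ _).symm_apply_eq).mpr (S.sigma_T x).symm

theorem T_bijective : Bijective S.T := bijective_iff_has_inverse.mpr ⟨S.U, S.U_T, S.T_U⟩

theorem U_bijective : Bijective S.U := bijective_iff_has_inverse.mpr ⟨S.T, S.T_U, S.U_T⟩

theorem sigma_tau_U (x y : X) : S.σ (S.τ y x) (S.U y) = S.U (S.σ x y) :=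
  (S.σ (S.σ x y)).injective <| by rw [sigma_sigma_sigma, sigma_U, sigma_U]

theorem tau_sigma_U (w x : X) : S.τ (S.σ (S.U x) w) x = S.T (S.τ w (S.U x)) := by
  have h := S.tau_tau_tau x (S.U x) w
  rw [tau_U] at h
  exact (S.τ _).injective (h.symm.trans (S.tau_T _).symm)

theorem sigmaCab_succ (k : ℕ) (x y : X) :
    S.sigmaCab (k + 1) x y = S.σ x (S.sigmaCab k (S.U x) y) := rfl

theorem tauChain_succ (k : ℕ) (y x : X) :
    S.tauChain (k + 1) y x = S.tauChain k (S.U y) (S.τ y x) := rfl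

theorem sigmaCab_bijective (k : ℕ) (x : X) : Bijective (S.sigmaCab k x) := by
  induction k generalizing x with
  | zero => exact bijective_id
  | succ k ih => exact (S.σ x).bijective.comp (ih (S.U x))

theorem tauChain_bijective (k : ℕ) (y : X) : Bijective (S.tauChain k y) := by
  induction k generalizing y with
  | zero => exact bijective_id
  | succ k ih => exact (ih (S.U y)).comp (S.τ y).bijective

theorem tauCab_bijective (k : ℕ) (y : X) : Bijective (S.tauCab k y) :=
  ((S.T_bijective.iterate _).comp (S.tauChain_bijective k y)).comp (S.U_bijective.iterate _)

/-- The head of the cable `(x, U x, …, Uᵃ x)`, of length `a + 1`, after the cable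
`(y, U y, …, U^{b-1} y)` has crossed it. -/
def blockTau (a b : ℕ) (y x : X) : X := S.tauChain b (S.sigmaCab a (S.U x) y) x

theorem U_blockTau_one (a : ℕ) (y x : X) :
    S.U (S.blockTau (a + 1) 1 y x) = S.blockTau a 1 y (S.U x) := by
  show S.U (S.τ (S.σ (S.U x) _) x) = _
  rw [tau_sigma_U, U_T]
  rfl

theorem sigmaCab_blockTau_one_U (a : ℕ) (x y : X) :
    S.sigmaCab (a + 1) (S.blockTau a 1 y x) (S.U y) = S.U (S.sigmaCab (a + 1) x y) := by
  induction a generalizing x with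
  | zero => exact S.sigma_tau_U x y
  | succ a ih =>
    rw [sigmaCab_succ _ _ (S.blockTau _ 1 y x), U_blockTau_one, ih]
    exact S.sigma_tau_U x _

theorem blockTau_succ (a b : ℕ) (y x : X) :
    S.blockTau a (b + 1) y x = S.blockTau a b (S.U y) (S.blockTau a 1 y x) := by
  have hcable : S.sigmaCab a (S.U (S.blockTau a 1 y x)) (S.U y)
      = S.U (S.sigmaCab a (S.U x) y) := by
    cases a with
    | zero => rfl
    | succ a => rw [U_blockTau_one]; exact S.sigmaCab_blockTau_one_U a (S.U x) y
  rw [blockTau, tauChain_succ, blockTau, ← hcable]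
  rfl

theorem sigma_sigmaCab_blockTau_one (a : ℕ) (x y : X) :
    S.σ (S.sigmaCab (a + 1) x y) (S.blockTau a 1 y x) = x :=
  S.sigma_sigma_tau x _

theorem sigmaCab_sigmaCab_blockTau (a b : ℕ) (x y : X) :
    S.sigmaCab b (S.sigmaCab (a + 1) x y) (S.blockTau a b y x) = x := by
  induction b generalizing x y with
  | zero => rfl
  | succ b ih =>
    rw [sigmaCab_succ, blockTau_succ, ← sigmaCab_blockTau_one_U, ih]
    exact S.sigma_sigmaCab_blockTau_one a x y

theorem sigma_sigmaCab_sigmaCab_blockTau_one (a : ℕ) (x y z : X) :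
    S.σ (S.sigmaCab (a + 1) x y) (S.sigmaCab (a + 1) (S.blockTau a 1 y x) z)
      = S.sigmaCab (a + 1) x (S.σ y z) := by
  induction a generalizing x with
  | zero => exact S.sigma_sigma_sigma x y z
  | succ a ih =>
    rw [sigmaCab_succ _ _ (S.blockTau _ 1 y x), U_blockTau_one]
    exact (S.sigma_sigma_sigma x _ _).trans (congrArg (S.σ x) (ih (S.U x)))

theorem sigmaCab_sigmaCab_sigmaCab_blockTau (a b : ℕ) (x y z : X) :
    S.sigmaCab b (S.sigmaCab (a + 1) x y) (S.sigmaCab (a + 1) (S.blockTau a b y x) z)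
      = S.sigmaCab (a + 1) x (S.sigmaCab b y z) := by
  induction b generalizing x y with
  | zero => rfl
  | succ b ih =>
    calc S.sigmaCab (b + 1) (S.sigmaCab (a + 1) x y)
          (S.sigmaCab (a + 1) (S.blockTau a (b + 1) y x) z)
        = S.σ (S.sigmaCab (a + 1) x y)
            (S.sigmaCab (a + 1) (S.blockTau a 1 y x) (S.sigmaCab b (S.U y) z)) := by
          rw [sigmaCab_succ, blockTau_succ, ← sigmaCab_blockTau_one_U, ih]
      _ = S.sigmaCab (a + 1) x (S.sigmaCab (b + 1) y z) :=
          S.sigma_sigmaCab_sigmaCab_blockTau_one a x y _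

theorem tauChain_sigma_U (k : ℕ) (w x : X) :
    S.tauChain k (S.σ (S.U x) w) x = S.T (S.tauChain k w (S.U x)) := by
  induction k generalizing w x with
  | zero => exact (S.T_U x).symm
  | succ k ih =>
    have h := ih (S.U w) (S.T (S.τ w (S.U x)))
    rw [U_T] at h
    rw [tauChain_succ, tauChain_succ, ← sigma_tau_U, tau_sigma_U, h]

theorem tauChain_sigmaCab_U (j k : ℕ) (x y : X) :
    S.tauChain k (S.sigmaCab j (S.U x) y) x = S.T^[j] (S.tauChain k y (S.U^[j] x)) := by
  induction j generalizing x with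
  | zero => rfl
  | succ j ih =>
    rw [sigmaCab_succ, tauChain_sigma_U, ih, iterate_succ_apply', iterate_succ_apply]

theorem tauCab_succ_eq_blockTau (a : ℕ) (y x : X) :
    S.tauCab (a + 1) y x = S.blockTau a (a + 1) y x :=
  (S.tauChain_sigmaCab_U a (a + 1) x y).symm

end YBSolution

/-- the `k`-cabled data again form a solution on `X`:
the cabled sigma and tau maps are bijections, and `r^{(k)}` is involutive and
satisfies the braid relation. -/
theorem cabled_is_solution [Fintype X] (S : YBSolution X) (k : ℕ) (hk : 0 < k) :
    (∀ x : X, Function.Bijective (S.sigmaCab k x)) ∧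
    (∀ x : X, Function.Bijective (S.tauCab k x)) ∧
    (∀ p : X × X, S.rCab k (S.rCab k p) = p) ∧
    (lmap (S.rCab k) ∘ rmap (S.rCab k) ∘ lmap (S.rCab k)
      = rmap (S.rCab k) ∘ lmap (S.rCab k) ∘ rmap (S.rCab k)) := by
  obtain ⟨a, rfl⟩ := Nat.exists_eq_add_of_le' hk
  have hinj (x : X) : Injective (S.sigmaCab (a + 1) x) := (S.sigmaCab_bijective _ x).injective
  have h1 (x y : X) :
      S.sigmaCab (a + 1) (S.sigmaCab (a + 1) x y) (S.tauCab (a + 1) y x) = x := by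
    rw [S.tauCab_succ_eq_blockTau]
    exact S.sigmaCab_sigmaCab_blockTau a (a + 1) x y
  have hb1 (x y z : X) : S.sigmaCab (a + 1) (S.sigmaCab (a + 1) x y)
      (S.sigmaCab (a + 1) (S.tauCab (a + 1) y x) z)
        = S.sigmaCab (a + 1) x (S.sigmaCab (a + 1) y z) := by
    rw [S.tauCab_succ_eq_blockTau]
    exact S.sigmaCab_sigmaCab_sigmaCab_blockTau a (a + 1) x y z
  exact ⟨S.sigmaCab_bijective _, S.tauCab_bijective _, pairMap_involutive hinj h1,
    pairMap_braid hinj h1 hb1⟩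
end

section
/- Let (X,r) be a solution. For each x ∈ X there exists a least positive integer l_x with π_{l_x}(x) = Id, and the Dehornoy class of (X,r) exists and equals the least common multiple of the numbers l_x over all x ∈ X. -/
open Function

variable {X : Type*}

/-!
Involutivity gives `T ∘ U = id`, so `U` is a permutation of the finite set `X`. The cabling
identity `π_{k+l}(x) = π_k(x) ∘ π_l(U^k x)`, together with `π_k(x)(U^k x) = x`, shows that
`{k | π_k(x) = id}` is closed under sums and under cancellation, hence consists of the multiples
of `l_x`. It is nonempty: if `p` is the `U`-period of `x`, then `π_{np}(x) = π_p(x)^n`, and the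
permutation `π_p(x)` has finite order. The Dehornoy class is then the least positive element of
the intersection of the sets `l_x ℕ`, which is their lcm.
-/

theorem Function.Injective.exists_iterate_eq_id {α : Type*} [Finite α] {f : α → α}
    (hf : Injective f) : ∃ n, 0 < n ∧ f^[n] = id := by
  have hbij := Finite.injective_iff_bijective.mp hf
  obtain ⟨n, hn, he⟩ := (isOfFinOrder_of_finite (Equiv.ofBijective f hbij)).exists_pow_eq_one
  refine ⟨n, hn, ?_⟩
  rw [← Equiv.coe_ofBijective f hbij, ← Equiv.Perm.coe_pow, he, Equiv.Perm.coe_one]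

theorem Nat.mem_iff_dvd_of_isLeast {A : Set ℕ} (hadd : ∀ a ∈ A, ∀ b ∈ A, a + b ∈ A)
    (hcancel : ∀ a ∈ A, ∀ b, a + b ∈ A → b ∈ A) {d : ℕ} (hd : IsLeast {l | 0 < l ∧ l ∈ A} d)
    (m : ℕ) : m ∈ A ↔ d ∣ m := by
  obtain ⟨⟨hd_pos, hdA⟩, hd_min⟩ := hd
  have hmul : ∀ q, d * q ∈ A := by
    intro q
    induction q with
    | zero => exact hcancel d hdA 0 hdA
    | succ q ih => exact hadd _ ih d hdA
  refine ⟨fun hm => ?_, fun ⟨q, hq⟩ => hq ▸ hmul q⟩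
  have hrem : m % d ∈ A := hcancel _ (hmul (m / d)) _ (by rwa [Nat.div_add_mod])
  by_contra hndvd
  have hrem_pos : 0 < m % d := Nat.pos_of_ne_zero fun h => hndvd (Nat.dvd_of_mod_eq_zero h)
  exact absurd (hd_min ⟨hrem_pos, hrem⟩) (not_le.mpr (Nat.mod_lt m hd_pos))

namespace YBSolution

variable [Fintype X] (S : YBSolution X)

theorem U_injective : Function.Injective S.U :=
  Function.LeftInverse.injective S.T_U

theorem sigmaCab_add (k l : ℕ) (x : X) :
    S.sigmaCab (k + l) x = S.sigmaCab k x ∘ S.sigmaCab l (S.U^[k] x) := by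
  induction k generalizing x with
  | zero => rw [Nat.zero_add]; rfl
  | succ k ih =>
    rw [Nat.succ_add, sigmaCab, sigmaCab, ih, Function.iterate_succ_apply]
    rfl

theorem sigmaCab_injective (k : ℕ) (x : X) : Function.Injective (S.sigmaCab k x) := by
  induction k generalizing x with
  | zero => exact Function.injective_id
  | succ k ih => exact (S.σ x).injective.comp (ih (S.U x))

theorem sigmaCab_apply_iterate_U (k : ℕ) (x : X) : S.sigmaCab k x (S.U^[k] x) = x := by
  induction k generalizing x with
  | zero => rfl
  | succ k ih =>
    rw [Function.iterate_succ_apply, sigmaCab, Function.comp_apply, ih]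
    exact Equiv.apply_symm_apply _ _

theorem iterate_U_eq_of_sigmaCab_eq_id {k : ℕ} {x : X} (h : S.sigmaCab k x = id) :
    S.U^[k] x = x := by
  simpa [h] using S.sigmaCab_apply_iterate_U k x

theorem sigmaCab_mul_of_iterate_U_eq {p : ℕ} {x : X} (hp : S.U^[p] x = x) (n : ℕ) :
    S.sigmaCab (n * p) x = (S.sigmaCab p x)^[n] := by
  induction n with
  | zero => rw [Nat.zero_mul]; rfl
  | succ n ih => rw [Nat.succ_mul, add_comm, sigmaCab_add, hp, ih, Function.iterate_succ']

theorem exists_sigmaCab_eq_id (x : X) : ∃ l, 0 < l ∧ S.sigmaCab l x = id := by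
  obtain ⟨p, hp_pos, hp⟩ := S.U_injective.exists_iterate_eq_id
  obtain ⟨n, hn_pos, hn⟩ := (S.sigmaCab_injective p x).exists_iterate_eq_id
  refine ⟨n * p, Nat.mul_pos hn_pos hp_pos, ?_⟩
  rw [S.sigmaCab_mul_of_iterate_U_eq (congrFun hp x) n, hn]

theorem sigmaCab_add_eq_id {a b : ℕ} {x : X} (ha : S.sigmaCab a x = id)
    (hb : S.sigmaCab b x = id) : S.sigmaCab (a + b) x = id := by
  rw [sigmaCab_add, S.iterate_U_eq_of_sigmaCab_eq_id ha, ha, hb, Function.comp_id]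

theorem sigmaCab_eq_id_of_add {a b : ℕ} {x : X} (ha : S.sigmaCab a x = id)
    (hab : S.sigmaCab (a + b) x = id) : S.sigmaCab b x = id := by
  rwa [sigmaCab_add, S.iterate_U_eq_of_sigmaCab_eq_id ha, ha, Function.id_comp] at hab

theorem sigmaCab_eq_id_iff_dvd {d : ℕ} {x : X}
    (hd : IsLeast {l | 0 < l ∧ S.sigmaCab l x = id} d) (m : ℕ) :
    S.sigmaCab m x = id ↔ d ∣ m :=
  Nat.mem_iff_dvd_of_isLeast (A := {l | S.sigmaCab l x = id})
    (fun _ ha _ hb => S.sigmaCab_add_eq_id ha hb)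
    (fun _ ha _ hab => S.sigmaCab_eq_id_of_add ha hab) hd m

end YBSolution

/-- for each `x` there is a least positive `l` with `π_l(x) = Id`
(`π_l = sigmaCab l`), and the Dehornoy class exists and equals the lcm of these
least integers. -/
theorem dehornoy_class_lcm [Fintype X] (S : YBSolution X) :
    (∀ x : X, ∃ l : ℕ, IsLeast {l : ℕ | 0 < l ∧ S.sigmaCab l x = id} l) ∧
    ∀ L : X → ℕ, (∀ x : X, IsLeast {l : ℕ | 0 < l ∧ S.sigmaCab l x = id} (L x)) →
      IsLeast {m : ℕ | 0 < m ∧ ∀ x : X, S.sigmaCab m x = id}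
        (Finset.univ.lcm L) := by
  refine ⟨fun x => ⟨_, Nat.sInf_mem (S.exists_sigmaCab_eq_id x), fun _ hl => Nat.sInf_le hl⟩,
    fun L hL => ?_⟩
  have hdvd : ∀ m, (∀ x, S.sigmaCab m x = id) ↔ Finset.univ.lcm L ∣ m := fun m => by
    simp only [S.sigmaCab_eq_id_iff_dvd (hL _), Finset.lcm_dvd_iff, Finset.mem_univ, true_implies]
  have hpos : 0 < Finset.univ.lcm L := by
    refine Nat.pos_of_ne_zero fun h => ?_
    obtain ⟨x, -, hx⟩ := Finset.lcm_eq_zero_iff.mp h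
    exact (hL x).1.1.ne' hx
  exact ⟨⟨hpos, (hdvd _).mpr dvd_rfl⟩, fun m ⟨hm_pos, hm⟩ => Nat.le_of_dvd hm_pos ((hdvd m).mp hm)⟩
end
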